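/- arXiv:1302.2832 — 6 statements merged into one kernel-verified Lean document; each statement's English description precedes it below -/
import Mathlib

section
/- Let A be a normed unital algebra with submultiplicative norm (‖ab‖ ≤ ‖a‖·‖b‖ for all a,b ∈ A) and ‖1‖ = 1. Let 0 ≤ S < T < ∞ and C > 0, let S = s₁ < s₂ < … < s_{n+1} = T be real numbers, and let a₁, …, a_n ∈ A satisfy ‖a_i‖ ≤ (s_{i+1} − s_i)·C for all i = 1, …, n. Then ‖∏_{i=1}^{n}(1 + a_i) − 1 − ∑_{i=1}^{n} a_i‖ ≤ (1/2)·(T − S)²·C²·exp(C·(T − S)), where the product is taken in the order of increasing index i. -/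
/-!
Write `D = ∏ (1 + aᵢ) - 1 - ∑ aᵢ` and `σ = ∑ ‖aᵢ‖`. Prepending a factor `1 + x` turns `D` into
`(1 + x) D + x ∑ aᵢ`, so `‖D‖ ≤ σ² / 2 · exp σ` follows by induction on the number of factors
from the scalar inequality `(1 + u) σ² / 2 · exp σ + u σ ≤ (u + σ)² / 2 · exp (u + σ)`, itself a
consequence of `1 + u ≤ exp u` and `1 ≤ exp σ`. The bounds on the `aᵢ` telescope to
`σ ≤ C (T - S)`.
-/

open Finset Real

theorem Fin.sum_univ_succ_sub_castSucc {M : Type*} [AddCommGroup M] {n : ℕ}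
    (f : Fin (n + 1) → M) : ∑ i : Fin n, (f i.succ - f i.castSucc) = f (Fin.last n) - f 0 := by
  induction n with
  | zero => simp
  | succ n ih =>
    rw [Fin.sum_univ_castSucc]
    simp only [Fin.succ_castSucc]
    rw [ih (fun i => f i.castSucc), Fin.succ_last, Fin.castSucc_zero]
    abel

theorem one_add_mul_sq_div_two_mul_exp_add_le {u σ : ℝ} (hu : 0 ≤ u) (hσ : 0 ≤ σ) :
    (1 + u) * (σ ^ 2 / 2 * exp σ) + u * σ ≤ (u + σ) ^ 2 / 2 * exp (u + σ) := by
  have hexp_u : 1 + u ≤ exp u := by linarith [add_one_le_exp u]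
  have hexp_σ : 1 ≤ exp σ := one_le_exp hσ
  calc (1 + u) * (σ ^ 2 / 2 * exp σ) + u * σ
      ≤ (σ ^ 2 / 2 + u * σ) * exp σ * (1 + u) := by
        have : 1 ≤ exp σ * (1 + u) := by nlinarith
        nlinarith [mul_le_mul_of_nonneg_left this (mul_nonneg hu hσ)]
    _ ≤ (u + σ) ^ 2 / 2 * exp σ * exp u := by gcongr; nlinarith
    _ = (u + σ) ^ 2 / 2 * exp (u + σ) := by rw [exp_add]; ring

theorem norm_prod_one_add_sub_one_sub_sum_le {A : Type*} [SeminormedRing A] {n : ℕ}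
    (a : Fin n → A) :
    ‖(List.ofFn fun i => 1 + a i).prod - 1 - ∑ i, a i‖ ≤
      (∑ i, ‖a i‖) ^ 2 / 2 * exp (∑ i, ‖a i‖) := by
  induction n with
  | zero => simp
  | succ n ih =>
    set x := a 0
    set P := (List.ofFn fun i : Fin n => 1 + a i.succ).prod
    set y := ∑ i : Fin n, a i.succ
    set σ := ∑ i : Fin n, ‖a i.succ‖
    have hσ : 0 ≤ σ := sum_nonneg fun i _ => norm_nonneg _
    have hpeel : (1 + x) * P - 1 - (x + y) = (P - 1 - y) + x * (P - 1 - y) + x * y := by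
      noncomm_ring
    rw [List.ofFn_succ, List.prod_cons, Fin.sum_univ_succ, Fin.sum_univ_succ, hpeel]
    calc ‖(P - 1 - y) + x * (P - 1 - y) + x * y‖
        ≤ ‖P - 1 - y‖ + ‖x‖ * ‖P - 1 - y‖ + ‖x‖ * σ := by
          refine norm_add₃_le.trans (add_le_add_three le_rfl (norm_mul_le _ _) ?_)
          exact (norm_mul_le _ _).trans (by gcongr; exact norm_sum_le _ _)
      _ = (1 + ‖x‖) * ‖P - 1 - y‖ + ‖x‖ * σ := by ring
      _ ≤ (1 + ‖x‖) * (σ ^ 2 / 2 * exp σ) + ‖x‖ * σ := by gcongr; exact ih _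
      _ ≤ (‖x‖ + σ) ^ 2 / 2 * exp (‖x‖ + σ) :=
          one_add_mul_sq_div_two_mul_exp_add_le (norm_nonneg x) hσ

theorem stmt_0_general {A : Type*} [NormedRing A]
    (S T C : ℝ)
    (n : ℕ) (s : Fin (n + 1) → ℝ)
    (hs0 : s 0 = S) (hsn : s (Fin.last n) = T)
    (a : Fin n → A)
    (ha : ∀ i : Fin n, ‖a i‖ ≤ (s i.succ - s i.castSucc) * C) :
    ‖(List.ofFn (fun i : Fin n => 1 + a i)).prod - 1 - ∑ i : Fin n, a i‖ ≤
      (1 / 2) * (T - S) ^ 2 * C ^ 2 * Real.exp (C * (T - S)) := by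
  have hσ_nonneg : 0 ≤ ∑ i, ‖a i‖ := sum_nonneg fun i _ => norm_nonneg _
  have hσ_le : ∑ i, ‖a i‖ ≤ C * (T - S) :=
    calc ∑ i, ‖a i‖ ≤ ∑ i : Fin n, (s i.succ - s i.castSucc) * C := sum_le_sum fun i _ => ha i
      _ = C * (T - S) := by rw [← sum_mul, Fin.sum_univ_succ_sub_castSucc, hs0, hsn, mul_comm]
  calc _ ≤ (∑ i, ‖a i‖) ^ 2 / 2 * exp (∑ i, ‖a i‖) := norm_prod_one_add_sub_one_sub_sum_le a
    _ ≤ (C * (T - S)) ^ 2 / 2 * exp (C * (T - S)) := by gcongr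
    _ = _ := by ring

/-- main estimate for products of perturbations of the identity in a
normed unital algebra. -/
theorem stmt_0 {A : Type*} [NormedRing A] [NormOneClass A] [NormedAlgebra ℂ A]
    (S T C : ℝ) (hS : 0 ≤ S) (hST : S < T) (hC : 0 < C)
    (n : ℕ) (s : Fin (n + 1) → ℝ) (hmono : StrictMono s)
    (hs0 : s 0 = S) (hsn : s (Fin.last n) = T)
    (a : Fin n → A)
    (ha : ∀ i : Fin n, ‖a i‖ ≤ (s i.succ - s i.castSucc) * C) :
    ‖(List.ofFn (fun i : Fin n => 1 + a i)).prod - 1 - ∑ i : Fin n, a i‖ ≤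
      (1 / 2) * (T - S) ^ 2 * C ^ 2 * Real.exp (C * (T - S)) :=
  stmt_0_general S T C n s hs0 hsn a ha
end

section
/- Let x₁, …, x_n be nonnegative real numbers and set Z := ∑_{i=1}^{n} x_i. Then ∏_{i=1}^{n}(1 + x_i) − 1 − Z ≤ (Z²/2)·exp(Z). In particular ∏_{i=1}^{n}(1 + x_i) ≤ exp(Z). -/
/-! Since `1 + xᵢ ≤ exp xᵢ`, the product is at most `exp Z`, so it suffices to show
`exp z - 1 - z ≤ (z²/2)·exp z` for `z ≥ 0`. Multiplied by `exp (-z)` this says that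
`z²/2 + (1 + z)·exp (-z)` stays above its value `1` at `0`, and that function is monotone on
`[0, ∞)` because its derivative is `z·(1 - exp (-z)) ≥ 0`. -/

open Real Set

lemma hasDerivAt_sq_div_two_add_one_add_mul_exp_neg (z : ℝ) :
    HasDerivAt (fun t => t ^ 2 / 2 + (1 + t) * exp (-t)) (z * (1 - exp (-z))) z := by
  have hsq : HasDerivAt (fun t : ℝ => t ^ 2 / 2) z z := by
    simpa using (hasDerivAt_pow 2 z).div_const 2
  have hexp : HasDerivAt (fun t : ℝ => exp (-t)) (-exp (-z)) z := by
    simpa using (hasDerivAt_neg z).exp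
  exact (hsq.add (((hasDerivAt_id z).const_add 1).mul hexp)).congr_deriv (by simp only [id]; ring)

lemma monotoneOn_sq_div_two_add_one_add_mul_exp_neg :
    MonotoneOn (fun t => t ^ 2 / 2 + (1 + t) * exp (-t)) (Ici 0) := by
  have hderiv := hasDerivAt_sq_div_two_add_one_add_mul_exp_neg
  refine monotoneOn_of_deriv_nonneg (convex_Ici 0)
    (fun t _ => (hderiv t).continuousAt.continuousWithinAt)
    (fun t _ => (hderiv t).differentiableAt.differentiableWithinAt) fun t ht => ?_
  rw [interior_Ici, mem_Ioi] at ht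
  rw [(hderiv t).deriv]
  exact mul_nonneg ht.le (sub_nonneg.mpr (exp_le_one_iff.mpr (neg_nonpos.mpr ht.le)))

lemma exp_sub_one_sub_le_sq_div_two_mul_exp {z : ℝ} (hz : 0 ≤ z) :
    exp z - 1 - z ≤ z ^ 2 / 2 * exp z := by
  have hmono : 1 ≤ z ^ 2 / 2 + (1 + z) * exp (-z) := by
    simpa using monotoneOn_sq_div_two_add_one_add_mul_exp_neg self_mem_Ici (mem_Ici.mpr hz) hz
  have hscaled := mul_le_mul_of_nonneg_left hmono (exp_pos z).le
  have hcancel : exp z * exp (-z) = 1 := by rw [← exp_add, add_neg_cancel, exp_zero]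
  nlinarith

/-- for nonnegative reals `xᵢ` with sum `Z`, one has
`∏ (1 + xᵢ) - 1 - Z ≤ (Z²/2)·exp Z`, and in particular `∏ (1 + xᵢ) ≤ exp Z`. -/
theorem stmt_3 (n : ℕ) (x : Fin n → ℝ) (hx : ∀ i, 0 ≤ x i) :
    (∏ i : Fin n, (1 + x i)) - 1 - (∑ i : Fin n, x i) ≤
        ((∑ i : Fin n, x i) ^ 2 / 2) * Real.exp (∑ i : Fin n, x i) ∧
      (∏ i : Fin n, (1 + x i)) ≤ Real.exp (∑ i : Fin n, x i) := by
  have hprod := prod_one_add_le_exp_sum Finset.univ hx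
  have hexp := exp_sub_one_sub_le_sq_div_two_mul_exp (Finset.univ.sum_nonneg fun i _ => hx i)
  exact ⟨by linarith, hprod⟩
end

section
/- Let A be a normed unital algebra with submultiplicative norm and ‖1‖ = 1, let 0 ≤ R < S and C > 0, and let (a_{r,s})_{R ≤ r ≤ s ≤ S} be a family of elements of A such that ‖a_{r,s}‖ ≤ (s − r)·C for all R ≤ r ≤ s ≤ S, and a_{r,t} = a_{r,s} + a_{s,t} whenever R ≤ r < s < t ≤ S. Set g_{r,s} := 1 + a_{r,s} and, for a partition α = {R = t₁ < t₂ < … < t_{n+1} = S} of [R,S], set Θ_α := g_{t₁,t₂}·g_{t₂,t₃}·⋯·g_{t_n,t_{n+1}}. Then the net (Θ_α)_{α ∈ P[R,S]}, indexed by the partitions of [R,S] partially ordered by inclusion, is a Cauchy net: for every ε > 0 there exists a partition γ of [R,S] such that for all partitions α, β of [R,S] with γ ⊆ α and γ ⊆ β one has ‖Θ_α − Θ_β‖ < ε. -/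
/-- A partition of the interval `[R, S]`: a finite set of reals containing `R` and `S`
all of whose elements lie in `[R, S]`. -/
def IsPartition (R S : ℝ) (α : Finset ℝ) : Prop :=
  R ∈ α ∧ S ∈ α ∧ ∀ t ∈ α, R ≤ t ∧ t ≤ S

/-- The list of consecutive pairs `(t₁,t₂), (t₂,t₃), …` of the elements of a finite set
of reals, sorted increasingly. -/
noncomputable def consecPairs (α : Finset ℝ) : List (ℝ × ℝ) :=
  (α.sort (· ≤ ·)).zip (α.sort (· ≤ ·)).tail

/-- The ordered product `g t₁ t₂ * g t₂ t₃ * ⋯ * g tₙ tₙ₊₁` over the consecutive points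
`t₁ < t₂ < … < tₙ₊₁` of a partition, taken in increasing order. -/
noncomputable def partitionProd {A : Type*} [Ring A] (g : ℝ → ℝ → A) (α : Finset ℝ) : A :=
  ((consecPairs α).map fun p => g p.1 p.2).prod

/-- The sum `U t₁ t₂ + U t₂ t₃ + ⋯ + U tₙ tₙ₊₁` over the consecutive points of a
partition. -/
noncomputable def partitionSum {A : Type*} [Ring A] (U : ℝ → ℝ → A) (α : Finset ℝ) : A :=
  ((consecPairs α).map fun p => U p.1 p.2).sum

/-- The mesh `max_i (t_{i+1} - t_i)` of a partition. -/
noncomputable def mesh (α : Finset ℝ) : ℝ :=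
  ((consecPairs α).map fun p => p.2 - p.1).foldr max 0

/-- `IsNetLimit g r s u` means that the net `α ↦ partitionProd g α`, indexed by the
partitions of `[r, s]` partially ordered by inclusion, converges to `u`. -/
def IsNetLimit {A : Type*} [NormedRing A] (g : ℝ → ℝ → A) (r s : ℝ) (u : A) : Prop :=
  ∀ ε > 0, ∃ γ : Finset ℝ, IsPartition r s γ ∧
    ∀ α : Finset ℝ, IsPartition r s α → γ ⊆ α → ‖partitionProd g α - u‖ < ε

/-! For a partition `δ` let `Θ δ` be the ordered product and `Q δ = ∑ (tᵢ₊₁ - tᵢ)²`.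
Inserting a point `t` between adjacent points `r < s` of `δ` turns the factor
`1 + a r s = 1 + a r t + a t s` into `(1 + a r t) * (1 + a t s)`, so `Θ` changes by
`X * (a r t * a t s) * Y`, where `X`, `Y` are products over the remaining intervals and
`‖X‖ * ‖Y‖ ≤ exp (C * (S - R))`. Since `Q` drops by exactly `2 (t - r) (s - t)`, the change is at
most `K * (Q δ - Q (insert t δ))` with `K = exp (C * (S - R)) * C ^ 2 / 2`. Telescoping, every
refinement `α` of `γ` has `‖Θ α - Θ γ‖ ≤ K * Q γ`, and `Q γ = (S - R) ^ 2 / n` is arbitrarily small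
for the uniform partition `γ` into `n` pieces. -/

def adjPairs {α : Type*} : List α → List (α × α)
  | x :: y :: l => (x, y) :: adjPairs (y :: l)
  | _ => []

section AdjPairs

variable {α : Type*}

theorem zip_tail_eq_adjPairs : ∀ l : List α, l.zip l.tail = adjPairs l
  | [] | [_] => rfl
  | x :: y :: l => by simpa [adjPairs] using zip_tail_eq_adjPairs (y :: l)

theorem adjPairs_append_cons : ∀ (l₁ : List α) (x : α) (l₂ : List α),
    adjPairs (l₁ ++ x :: l₂) = adjPairs (l₁ ++ [x]) ++ adjPairs (x :: l₂)
  | [], _, _ | [_], _, _ => by simp [adjPairs]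
  | y :: z :: l₁, x, l₂ => by
      have ih := adjPairs_append_cons (z :: l₁) x l₂
      simp only [List.cons_append, adjPairs] at ih ⊢
      rw [ih]

theorem mem_adjPairs {r : α → α → Prop} : ∀ {l : List α}, l.Pairwise r →
    ∀ p ∈ adjPairs l, p.1 ∈ l ∧ p.2 ∈ l ∧ r p.1 p.2
  | [], _, _, hp | [_], _, _, hp => by simp [adjPairs] at hp
  | x :: y :: l, hl, p, hp => by
      rcases List.mem_cons.1 hp with rfl | hp
      · exact ⟨by simp, by simp, List.rel_of_pairwise_cons hl (by simp)⟩
      · obtain ⟨h₁, h₂, h⟩ := mem_adjPairs hl.of_cons p hp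
        exact ⟨List.mem_cons_of_mem _ h₁, List.mem_cons_of_mem _ h₂, h⟩

theorem sum_adjPairs_sub [AddCommGroup α] : ∀ (x : α) (l : List α),
    ((adjPairs (x :: l)).map fun p => p.2 - p.1).sum = (x :: l).getLast (by simp) - x
  | _, [] => by simp [adjPairs]
  | x, y :: l => by
      simp only [adjPairs, List.map_cons, List.sum_cons, sum_adjPairs_sub y l,
        List.getLast_cons_cons]
      abel

theorem exists_eq_append_of_lt_of_lt [LinearOrder α] {t : α} : ∀ {l : List α},
    l.Pairwise (· ≤ ·) → t ∉ l → (∃ u ∈ l, u < t) → (∃ v ∈ l, t < v) →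
    ∃ l₁ r s l₂, l = l₁ ++ r :: s :: l₂ ∧ r < t ∧ t < s
  | [], _, _, ⟨_, hu, _⟩, _ => absurd hu List.not_mem_nil
  | [x], _, _, ⟨u, hu, hut⟩, ⟨v, hv, htv⟩ => by
      simp only [List.mem_singleton] at hu hv
      subst hu hv
      exact absurd (hut.trans htv) (lt_irrefl _)
  | x :: y :: l, hl, ht, ⟨u, hu, hut⟩, ⟨v, hv, htv⟩ => by
      have hxt : x < t := by
        rcases List.mem_cons.1 hu with rfl | hu
        · exact hut
        · exact (List.rel_of_pairwise_cons hl hu).trans_lt hut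
      rcases lt_or_gt_of_ne (fun h : y = t => ht (by simp [h])) with hyt | hty
      · have hv' : v ∈ y :: l := by
          rcases List.mem_cons.1 hv with rfl | hv
          · exact absurd (hxt.trans htv) (lt_irrefl _)
          · exact hv
        obtain ⟨l₁, r, s, l₂, hl₁, hrt, hts⟩ := exists_eq_append_of_lt_of_lt hl.of_cons
          (fun h => ht (List.mem_cons_of_mem _ h)) ⟨y, by simp, hyt⟩ ⟨v, hv', htv⟩
        exact ⟨x :: l₁, r, s, l₂, by rw [hl₁, List.cons_append], hrt, hts⟩
      · exact ⟨[], x, y, l, rfl, hxt, hty⟩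

theorem adjPairs_map {α β : Type*} (f : α → β) : ∀ l : List α,
    adjPairs (l.map f) = (adjPairs l).map (Prod.map f f)
  | [] | [_] => rfl
  | x :: y :: l => by
      show (f x, f y) :: adjPairs ((y :: l).map f) = _
      rw [adjPairs_map f (y :: l)]
      rfl

theorem adjPairs_range_succ : ∀ n : ℕ,
    adjPairs (List.range (n + 1)) = (List.range n).map fun i => (i, i + 1)
  | 0 => rfl
  | n + 1 => by
      rw [List.range_succ, List.range_succ, List.append_assoc, List.singleton_append,
        adjPairs_append_cons, ← List.range_succ, adjPairs_range_succ n]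
      simp [adjPairs, List.range_succ]

end AdjPairs

theorem consecPairs_eq_adjPairs (δ : Finset ℝ) : consecPairs δ = adjPairs δ.sort :=
  zip_tail_eq_adjPairs _

theorem Finset.sort_insert_eq_append {α : Type*} [LinearOrder α] {δ : Finset α} {t r s : α}
    {l₁ l₂ : List α} (ht : t ∉ δ) (hδ : δ.sort = l₁ ++ r :: s :: l₂) (hrt : r < t) (hts : t < s) :
    (insert t δ).sort = l₁ ++ r :: t :: s :: l₂ := by
  have hsorted : (l₁ ++ r :: s :: l₂).Pairwise (· ≤ ·) := hδ ▸ δ.pairwise_sort _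
  rw [← List.isChain_iff_pairwise, List.isChain_append_cons_cons] at hsorted
  refine List.Perm.eq_of_pairwise' ((insert t δ).pairwise_sort _) ?_ ?_
  · rw [← List.isChain_iff_pairwise, List.isChain_append_cons_cons, List.isChain_cons_cons]
    exact ⟨hsorted.1, hrt.le, hts.le, hsorted.2.2⟩
  · refine (((insert t δ).sort_perm_toList (· ≤ ·)).trans (Finset.toList_insert ht)).trans ?_
    refine (List.Perm.cons t (δ.sort_perm_toList (· ≤ ·)).symm).trans ?_
    rw [hδ]
    simpa using (List.perm_middle (l₁ := l₁ ++ [r]) (a := t) (l₂ := s :: l₂)).symm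

theorem exists_consecPairs_insert {δ : Finset ℝ} {t : ℝ} (ht : t ∉ δ) (hlo : ∃ u ∈ δ, u < t)
    (hhi : ∃ v ∈ δ, t < v) :
    ∃ (ps qs : List (ℝ × ℝ)) (r s : ℝ), r ∈ δ ∧ s ∈ δ ∧ r < t ∧ t < s ∧
      consecPairs δ = ps ++ (r, s) :: qs ∧
      consecPairs (insert t δ) = ps ++ (r, t) :: (t, s) :: qs := by
  obtain ⟨u, hu, hut⟩ := hlo
  obtain ⟨v, hv, htv⟩ := hhi
  obtain ⟨l₁, r, s, l₂, hsort, hrt, hts⟩ := exists_eq_append_of_lt_of_lt (δ.pairwise_sort _)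
    (by simpa using ht) ⟨u, by simpa using hu, hut⟩ ⟨v, by simpa using hv, htv⟩
  have hr : r ∈ δ := by simp [← Finset.mem_sort (· ≤ ·), hsort]
  have hs : s ∈ δ := by simp [← Finset.mem_sort (· ≤ ·), hsort]
  refine ⟨adjPairs (l₁ ++ [r]), adjPairs (s :: l₂), r, s, hr, hs, hrt, hts, ?_, ?_⟩
  · rw [consecPairs_eq_adjPairs, hsort, adjPairs_append_cons]
    rfl
  · rw [consecPairs_eq_adjPairs, Finset.sort_insert_eq_append ht hsort hrt hts,
      adjPairs_append_cons]
    rfl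

theorem mem_consecPairs {δ : Finset ℝ} {p : ℝ × ℝ} (hp : p ∈ consecPairs δ) :
    p.1 ∈ δ ∧ p.2 ∈ δ ∧ p.1 ≤ p.2 := by
  rw [consecPairs_eq_adjPairs] at hp
  simpa using mem_adjPairs (δ.pairwise_sort _) p hp

theorem sum_consecPairs_sub_le {R S : ℝ} {δ : Finset ℝ} (hδ : IsPartition R S δ) :
    ((consecPairs δ).map fun p => p.2 - p.1).sum ≤ S - R := by
  rw [consecPairs_eq_adjPairs]
  match h : δ.sort with
  | [] => simpa [← Finset.mem_sort (· ≤ ·), h] using hδ.1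
  | x :: l =>
    have hx : x ∈ δ := by simp [← Finset.mem_sort (· ≤ ·), h]
    have hlast : (x :: l).getLast (by simp) ∈ δ := by
      rw [← Finset.mem_sort (· ≤ ·), h]
      exact List.getLast_mem _
    rw [h, sum_adjPairs_sub]
    linarith [(hδ.2.2 x hx).1, (hδ.2.2 _ hlast).2]

theorem IsPartition.insert {R S t : ℝ} {δ : Finset ℝ} (hδ : IsPartition R S δ) (hRt : R ≤ t)
    (htS : t ≤ S) : IsPartition R S (insert t δ) :=
  ⟨Finset.mem_insert_of_mem hδ.1, Finset.mem_insert_of_mem hδ.2.1, by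
    simpa using ⟨⟨hRt, htS⟩, hδ.2.2⟩⟩

theorem partitionSum_sq_nonneg (δ : Finset ℝ) :
    0 ≤ partitionSum (fun r s => (s - r) ^ 2) δ :=
  List.sum_nonneg fun _ hx => by
    obtain ⟨p, -, rfl⟩ := List.mem_map.1 hx
    positivity

theorem exists_partition_partitionSum_sq_lt {R S : ℝ} (hRS : R < S) {η : ℝ} (hη : 0 < η) :
    ∃ γ : Finset ℝ, IsPartition R S γ ∧ partitionSum (fun r s => (s - r) ^ 2) γ < η := by
  obtain ⟨n, hn⟩ := exists_nat_gt ((S - R) ^ 2 / η)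
  have hn₀ : (0 : ℝ) < n := lt_of_le_of_lt (by positivity) hn
  set h := (S - R) / n
  set f : ℕ → ℝ := fun i => R + i * h
  have hf : StrictMono f := fun i j hij => by
    simpa [f] using mul_lt_mul_of_pos_right (Nat.cast_lt.2 hij) (by positivity : 0 < h)
  have hfn : f n = S := by simp only [f, h]; field_simp; ring
  set L := (List.range (n + 1)).map f
  have hsort : L.toFinset.sort = L :=
    (List.toFinset_sort _ ((List.nodup_range).map hf.injective)).2
      (List.pairwise_map.2 (List.pairwise_lt_range.imp fun hij => (hf hij).le))
  refine ⟨L.toFinset, ⟨?_, ?_, ?_⟩, ?_⟩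
  · simpa [L] using ⟨0, by omega, by simp [f]⟩
  · simpa [L] using ⟨n, by omega, hfn⟩
  · simp only [List.mem_toFinset, List.mem_map, List.mem_range, L]
    rintro _ ⟨i, hi, rfl⟩
    refine ⟨le_add_of_nonneg_right (by positivity), ?_⟩
    rw [← hfn]
    exact hf.monotone (by omega)
  · have hgap : ∀ i : ℕ, (f (i + 1) - f i) ^ 2 = h ^ 2 := fun i => by simp only [f]; push_cast; ring
    simp only [partitionSum, consecPairs_eq_adjPairs, hsort, L, adjPairs_map, adjPairs_range_succ,
      List.map_map, Function.comp_def, Prod.map_apply, hgap, List.map_const', List.length_range,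
      List.sum_replicate, nsmul_eq_mul]
    calc n * h ^ 2 = (S - R) ^ 2 / n := by simp only [h]; field_simp
      _ < η := by
        rw [div_lt_iff₀ hn₀]
        rwa [div_lt_iff₀ hη, mul_comm] at hn

section ProductEstimates

variable {A : Type*} [NormedRing A] [NormOneClass A] {R S C : ℝ} {a : ℝ → ℝ → A}

theorem norm_prod_one_add_le_exp
    (ha_norm : ∀ r s, R ≤ r → r ≤ s → s ≤ S → ‖a r s‖ ≤ (s - r) * C) :
    ∀ ps : List (ℝ × ℝ), (∀ p ∈ ps, R ≤ p.1 ∧ p.1 ≤ p.2 ∧ p.2 ≤ S) →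
      ‖(ps.map fun p => 1 + a p.1 p.2).prod‖ ≤ Real.exp (C * (ps.map fun p => p.2 - p.1).sum)
  | [], _ => by simp
  | p :: ps, hps => by
      obtain ⟨hRp, hp, hpS⟩ := hps p (by simp)
      have hfirst : ‖1 + a p.1 p.2‖ ≤ Real.exp (C * (p.2 - p.1)) :=
        calc ‖1 + a p.1 p.2‖ ≤ 1 + (p.2 - p.1) * C := by
              simpa using (norm_add_le (1 : A) _).trans (add_le_add_right (ha_norm _ _ hRp hp hpS) _)
          _ ≤ Real.exp (C * (p.2 - p.1)) := by linarith [Real.add_one_le_exp (C * (p.2 - p.1))]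
      have hrest := norm_prod_one_add_le_exp ha_norm ps fun q hq => hps q (by simp [hq])
      simp only [List.map_cons, List.prod_cons, List.sum_cons, mul_add, Real.exp_add]
      exact (norm_mul_le _ _).trans
        (mul_le_mul hfirst hrest (norm_nonneg _) (Real.exp_nonneg _))

theorem norm_prod_mul_norm_prod_le_exp (hC : 0 ≤ C)
    (ha_norm : ∀ r s, R ≤ r → r ≤ s → s ≤ S → ‖a r s‖ ≤ (s - r) * C)
    {δ : Finset ℝ} (hδ : IsPartition R S δ) {ps qs : List (ℝ × ℝ)} {q : ℝ × ℝ}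
    (hpairs : consecPairs δ = ps ++ q :: qs) :
    ‖(ps.map fun p => 1 + a p.1 p.2).prod‖ * ‖(qs.map fun p => 1 + a p.1 p.2).prod‖ ≤
      Real.exp (C * (S - R)) := by
  have hmem : ∀ p ∈ ps ++ qs, R ≤ p.1 ∧ p.1 ≤ p.2 ∧ p.2 ≤ S := fun p hp => by
    obtain ⟨h₁, h₂, h⟩ := mem_consecPairs (p := p) (δ := δ) (by
      rw [hpairs]; rcases List.mem_append.1 hp with hp | hp <;> simp [hp])
    exact ⟨(hδ.2.2 _ h₁).1, h, (hδ.2.2 _ h₂).2⟩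
  set gap : ℝ × ℝ → ℝ := fun p => p.2 - p.1
  have hgaps : ((ps ++ qs).map gap).sum ≤ S - R := by
    have hq := (mem_consecPairs (hpairs ▸ List.mem_append_right ps List.mem_cons_self)).2.2
    have := sum_consecPairs_sub_le hδ
    simp only [hpairs, List.map_append, List.map_cons, List.sum_append, List.sum_cons] at this ⊢
    linarith
  calc _ ≤ Real.exp (C * (ps.map gap).sum) * Real.exp (C * (qs.map gap).sum) :=
        mul_le_mul (norm_prod_one_add_le_exp ha_norm ps fun p hp => hmem p (by simp [hp]))
          (norm_prod_one_add_le_exp ha_norm qs fun p hp => hmem p (by simp [hp]))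
          (norm_nonneg _) (Real.exp_nonneg _)
    _ = Real.exp (C * ((ps ++ qs).map gap).sum) := by
        rw [← Real.exp_add, List.map_append, List.sum_append, mul_add]
    _ ≤ Real.exp (C * (S - R)) := Real.exp_le_exp.2 (mul_le_mul_of_nonneg_left hgaps hC)

theorem norm_partitionProd_insert_sub_le (hC : 0 ≤ C)
    (ha_norm : ∀ r s, R ≤ r → r ≤ s → s ≤ S → ‖a r s‖ ≤ (s - r) * C)
    (ha_add : ∀ r s t, R ≤ r → r < s → s < t → t ≤ S → a r t = a r s + a s t)
    {δ : Finset ℝ} (hδ : IsPartition R S δ) {t : ℝ} (ht : t ∉ δ) (hRt : R < t) (htS : t < S) :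
    ‖partitionProd (fun r s => 1 + a r s) (insert t δ) -
        partitionProd (fun r s => 1 + a r s) δ‖ ≤
      Real.exp (C * (S - R)) * C ^ 2 / 2 * (partitionSum (fun r s => (s - r) ^ 2) δ -
        partitionSum (fun r s => (s - r) ^ 2) (insert t δ)) := by
  obtain ⟨ps, qs, r, s, hr, hs, hrt, hts, hδ_pairs, hins_pairs⟩ :=
    exists_consecPairs_insert ht ⟨R, hδ.1, hRt⟩ ⟨S, hδ.2.1, htS⟩
  have hRr := (hδ.2.2 r hr).1
  have hsS := (hδ.2.2 s hs).2
  set P := (ps.map fun p => 1 + a p.1 p.2).prod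
  set Q := (qs.map fun p => 1 + a p.1 p.2).prod
  have hdiff : partitionProd (fun r s => 1 + a r s) (insert t δ) -
      partitionProd (fun r s => 1 + a r s) δ = P * (a r t * a t s) * Q := by
    simp only [partitionProd, hδ_pairs, hins_pairs, List.map_append, List.map_cons,
      List.prod_append, List.prod_cons, ha_add r t s hRr hrt hts hsS, P, Q]
    noncomm_ring
  have hsq : partitionSum (fun r s => (s - r) ^ 2) δ -
      partitionSum (fun r s => (s - r) ^ 2) (insert t δ) = 2 * ((t - r) * (s - t)) := by
    simp only [partitionSum, hδ_pairs, hins_pairs, List.map_append, List.map_cons,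
      List.sum_append, List.sum_cons]
    ring
  have hrts : ‖a r t * a t s‖ ≤ (t - r) * C * ((s - t) * C) :=
    (norm_mul_le _ _).trans (mul_le_mul (ha_norm r t hRr hrt.le (hts.le.trans hsS))
      (ha_norm t s (hRr.trans hrt.le) hts.le hsS) (norm_nonneg _) (by nlinarith))
  rw [hdiff, hsq]
  calc ‖P * (a r t * a t s) * Q‖ ≤ ‖P‖ * ‖a r t * a t s‖ * ‖Q‖ :=
        (norm_mul_le _ _).trans (mul_le_mul_of_nonneg_right (norm_mul_le _ _) (norm_nonneg _))
    _ = ‖P‖ * ‖Q‖ * ‖a r t * a t s‖ := by ring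
    _ ≤ Real.exp (C * (S - R)) * ((t - r) * C * ((s - t) * C)) :=
        mul_le_mul (norm_prod_mul_norm_prod_le_exp hC ha_norm hδ hδ_pairs) hrts (norm_nonneg _)
          (Real.exp_nonneg _)
    _ = _ := by ring

theorem norm_partitionProd_sub_le_of_subset (hC : 0 ≤ C)
    (ha_norm : ∀ r s, R ≤ r → r ≤ s → s ≤ S → ‖a r s‖ ≤ (s - r) * C)
    (ha_add : ∀ r s t, R ≤ r → r < s → s < t → t ≤ S → a r t = a r s + a s t)
    {δ α : Finset ℝ} (hδ : IsPartition R S δ) (hα : IsPartition R S α) (hδα : δ ⊆ α) :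
    ‖partitionProd (fun r s => 1 + a r s) α - partitionProd (fun r s => 1 + a r s) δ‖ ≤
      Real.exp (C * (S - R)) * C ^ 2 / 2 * partitionSum (fun r s => (s - r) ^ 2) δ := by
  set K := Real.exp (C * (S - R)) * C ^ 2 / 2
  set Θ := partitionProd (fun r s => 1 + a r s)
  set Q := partitionSum (fun r s => (s - r) ^ 2)
  -- `K * Q` is a potential that pays for every refinement step.
  suffices H : ∀ s : Finset ℝ, ∀ δ, IsPartition R S δ → Disjoint s δ →
      (∀ t ∈ s, R < t ∧ t < S) → ‖Θ (s ∪ δ) - Θ δ‖ + K * Q (s ∪ δ) ≤ K * Q δ by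
    have h := H (α \ δ) δ hδ Finset.sdiff_disjoint fun t ht => by
      obtain ⟨htα, htδ⟩ := Finset.mem_sdiff.1 ht
      obtain ⟨hRt, htS⟩ := hα.2.2 t htα
      exact ⟨hRt.lt_of_ne (by rintro rfl; exact htδ hδ.1),
        htS.lt_of_ne (by rintro rfl; exact htδ hδ.2.1)⟩
    rw [Finset.sdiff_union_of_subset hδα] at h
    nlinarith [partitionSum_sq_nonneg α, show 0 ≤ K by positivity]
  intro s
  induction s using Finset.induction_on with
  | empty => simp
  | insert t s hts ih =>
    intro δ hδ hdisj hs
    obtain ⟨htδ, hsδ⟩ := Finset.disjoint_insert_left.1 hdisj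
    obtain ⟨hRt, htS⟩ := hs t (Finset.mem_insert_self t s)
    have hstep : ‖Θ (insert t δ) - Θ δ‖ ≤ K * (Q δ - Q (insert t δ)) :=
      norm_partitionProd_insert_sub_le hC ha_norm ha_add hδ htδ hRt htS
    have hrest := ih (insert t δ) (hδ.insert hRt.le htS.le)
      (Finset.disjoint_insert_right.2 ⟨hts, hsδ⟩) fun u hu => hs u (Finset.mem_insert_of_mem hu)
    rw [Finset.insert_union, ← Finset.union_insert]
    linarith [norm_sub_le_norm_sub_add_norm_sub (Θ (s ∪ insert t δ)) (Θ (insert t δ)) (Θ δ)]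

end ProductEstimates

theorem stmt_5_general {A : Type*} [NormedRing A] [NormOneClass A]
    (R S C : ℝ) (hRS : R < S) (hC : 0 < C)
    (a : ℝ → ℝ → A)
    (ha_norm : ∀ r s, R ≤ r → r ≤ s → s ≤ S → ‖a r s‖ ≤ (s - r) * C)
    (ha_add : ∀ r s t, R ≤ r → r < s → s < t → t ≤ S → a r t = a r s + a s t) :
    ∀ ε > 0, ∃ γ : Finset ℝ, IsPartition R S γ ∧
      ∀ α β : Finset ℝ, IsPartition R S α → IsPartition R S β → γ ⊆ α → γ ⊆ β →
        ‖partitionProd (fun r s => 1 + a r s) α -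
            partitionProd (fun r s => 1 + a r s) β‖ < ε := by
  intro ε hε
  set K := Real.exp (C * (S - R)) * C ^ 2 / 2
  set Θ := partitionProd (fun r s => 1 + a r s)
  set Q := partitionSum (fun r s => (s - r) ^ 2)
  have hK : 0 < K := by positivity
  obtain ⟨γ, hγ, hQγ⟩ := exists_partition_partitionSum_sq_lt hRS (div_pos hε (mul_pos two_pos hK))
  rw [lt_div_iff₀ (mul_pos two_pos hK)] at hQγ
  refine ⟨γ, hγ, fun α β hα hβ hγα hγβ => ?_⟩
  have hαγ : ‖Θ α - Θ γ‖ ≤ K * Q γ :=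
    norm_partitionProd_sub_le_of_subset hC.le ha_norm ha_add hγ hα hγα
  have hβγ : ‖Θ β - Θ γ‖ ≤ K * Q γ :=
    norm_partitionProd_sub_le_of_subset hC.le ha_norm ha_add hγ hβ hγβ
  calc ‖Θ α - Θ β‖ ≤ ‖Θ α - Θ γ‖ + ‖Θ β - Θ γ‖ := by
        simpa only [norm_sub_rev (Θ γ)] using norm_sub_le_norm_sub_add_norm_sub (Θ α) (Θ γ) (Θ β)
    _ < ε := by linarith

/-- the net of ordered products `Θ_α` over partitions of `[R, S]`
is a Cauchy net. -/
theorem stmt_5 {A : Type*} [NormedRing A] [NormOneClass A] [NormedAlgebra ℂ A]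
    (R S C : ℝ) (hR : 0 ≤ R) (hRS : R < S) (hC : 0 < C)
    (a : ℝ → ℝ → A)
    (ha_norm : ∀ r s, R ≤ r → r ≤ s → s ≤ S → ‖a r s‖ ≤ (s - r) * C)
    (ha_add : ∀ r s t, R ≤ r → r < s → s < t → t ≤ S → a r t = a r s + a s t) :
    ∀ ε > 0, ∃ γ : Finset ℝ, IsPartition R S γ ∧
      ∀ α β : Finset ℝ, IsPartition R S α → IsPartition R S β → γ ⊆ α → γ ⊆ β →
        ‖partitionProd (fun r s => 1 + a r s) α -
            partitionProd (fun r s => 1 + a r s) β‖ < ε :=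
  stmt_5_general R S C hRS hC a ha_norm ha_add
end

section
/- Let A be a normed unital algebra with submultiplicative norm and ‖1‖ = 1, let 0 ≤ R < S and C > 0, and let (a_{r,s})_{R ≤ r ≤ s ≤ S} be a family of elements of A such that ‖a_{r,s}‖ ≤ (s − r)·C for all R ≤ r ≤ s ≤ S, and a_{r,t} = a_{r,s} + a_{s,t} whenever R ≤ r < s < t ≤ S. Set g_{r,s} := 1 + a_{r,s} and, for a partition α of [R,S], let Θ_α be the ordered product of the g's over consecutive points of α. Then for all partitions γ and α of [R,S] with γ ⊆ α one has ‖Θ_α − Θ_γ‖ ≤ (1/2)·‖γ‖·(S − R)·C²·exp(C·(S − R)), where ‖γ‖ denotes the mesh of γ. -/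
/-!
On a single interval `[r, t]` of `γ`, with refining points `r = t₀ < ⋯ < tₖ = t` from `α`, the
additivity `a r t = ∑ a tᵢ tᵢ₊₁` shows that `∏ (1 + a tᵢ tᵢ₊₁)` differs from `1 + a r t` only by
products of two or more increments; inductively this error is at most
`(C (t - r))² / 2 · exp (C (t - r))`. Telescoping over the intervals of `γ`, with every partial
product bounded by `exp (C · length)`, the errors add up to at most
`C² / 2 · exp (C (S - R)) · ∑ (tᵢ₊₁ - tᵢ)² ≤ C² / 2 · exp (C (S - R)) · ‖γ‖ · (S - R)`.
-/

open Real Set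

section ConsecProd

variable {α M : Type*} [Monoid M] (g : α → α → M)

def consecProd (l : List α) : M :=
  ((l.zip l.tail).map fun p => g p.1 p.2).prod

@[simp]
lemma consecProd_singleton (x : α) : consecProd g [x] = 1 := rfl

@[simp]
lemma consecProd_cons_cons (x y : α) (l : List α) :
    consecProd g (x :: y :: l) = g x y * consecProd g (y :: l) := rfl

lemma consecProd_append_cons (l₁ l₂ : List α) (t : α) :
    consecProd g (l₁ ++ t :: l₂) = consecProd g (l₁ ++ [t]) * consecProd g (t :: l₂) := by
  induction l₁ with
  | nil => simp
  | cons x l₁ ih =>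
    cases l₁ with
    | nil => simp
    | cons y l₁ => simp only [List.cons_append, consecProd_cons_cons] at ih ⊢; rw [ih, mul_assoc]

lemma partitionProd_eq_consecProd {A : Type*} [Ring A] (g : ℝ → ℝ → A) (α : Finset ℝ) :
    partitionProd g α = consecProd g (α.sort (· ≤ ·)) := rfl

end ConsecProd

noncomputable def listMesh (l : List ℝ) : ℝ :=
  ((l.zip l.tail).map fun p => p.2 - p.1).foldr max 0

lemma listMesh_cons_cons (x y : ℝ) (l : List ℝ) :
    listMesh (x :: y :: l) = max (y - x) (listMesh (y :: l)) := rfl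

lemma mesh_eq_listMesh (α : Finset ℝ) : mesh α = listMesh (α.sort (· ≤ ·)) := rfl

lemma List.getLast?_eq_of_forall_le {α : Type*} [PartialOrder α] {l : List α} {t : α}
    (hl : l.Pairwise (· ≤ ·)) (ht : t ∈ l) (hle : ∀ y ∈ l, y ≤ t) : l.getLast? = some t := by
  rw [List.getLast?_eq_some_getLast (List.ne_nil_of_mem ht)]
  exact congrArg some (le_antisymm (hle _ (List.getLast_mem _)) (hl.rel_getLast ht))

lemma List.subset_of_subset_append_cons {α : Type*} [Preorder α] {s : α} {l l₁ l₂ : List α}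
    (hl : (s :: l).Pairwise (· < ·)) (h : (l₁ ++ s :: l₂).Pairwise (· < ·))
    (hsub : l ⊆ l₁ ++ s :: l₂) : l ⊆ l₂ := by
  intro x hx
  have hsx : s < x := List.rel_of_pairwise_cons hl hx
  rcases List.mem_append.1 (hsub hx) with hx₁ | hx₂
  · exact absurd (List.pairwise_append.1 h |>.2.2 x hx₁ s List.mem_cons_self) hsx.asymm
  · rcases List.mem_cons.1 hx₂ with rfl | hx₂
    · exact absurd hsx (lt_irrefl _)
    · exact hx₂

lemma List.head_le_of_getLast?_eq_some {α : Type*} [Preorder α] {x t : α} {l : List α}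
    (hl : (x :: l).Pairwise (· ≤ ·)) (ht : (x :: l).getLast? = some t) : x ≤ t := by
  rcases List.mem_cons.1 (List.mem_of_getLast? ht) with rfl | ht
  · exact le_rfl
  · exact List.rel_of_pairwise_cons hl ht

lemma List.eq_nil_of_getLast?_cons_eq_some {α : Type*} [Preorder α] {x : α} {l : List α}
    (hl : (x :: l).Pairwise (· < ·)) (hx : (x :: l).getLast? = some x) : l = [] := by
  cases l with
  | nil => rfl
  | cons y l =>
    exact absurd (List.rel_of_pairwise_cons hl (List.mem_of_getLast? (by simpa using hx)))
      (lt_irrefl _)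

lemma norm_mul_sub_mul_le {A : Type*} [NonUnitalSeminormedRing A] (x y x' y' : A) :
    ‖x * y - x' * y'‖ ≤ ‖x - x'‖ * ‖y‖ + ‖x'‖ * ‖y - y'‖ := by
  rw [show x * y - x' * y' = (x - x') * y + x' * (y - y') by noncomm_ring]
  exact (norm_add_le _ _).trans (add_le_add (norm_mul_le _ _) (norm_mul_le _ _))

lemma exp_mul_sq_add_mul_le {u v : ℝ} (hu : 0 ≤ u) (hv : 0 ≤ v) :
    exp u * (v ^ 2 / 2 * exp v) + u * v ≤ (u + v) ^ 2 / 2 * exp (u + v) := by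
  have h1 : 1 ≤ exp (u + v) := one_le_exp (by positivity)
  rw [exp_add] at h1 ⊢
  nlinarith [mul_nonneg hu hv, mul_nonneg (sq_nonneg u) (exp_pos u).le, exp_pos v]

section Additive

variable {E : Type*} [NormedAddCommGroup E] {R S C : ℝ} {a : ℝ → ℝ → E}
  (ha_norm : ∀ r s, R ≤ r → r ≤ s → s ≤ S → ‖a r s‖ ≤ (s - r) * C)

include ha_norm

lemma apply_self_eq_zero {x : ℝ} (hR : R ≤ x) (hS : x ≤ S) : a x x = 0 :=
  norm_le_zero_iff.1 (by simpa using ha_norm x x hR le_rfl hS)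

lemma apply_add_of_le (ha_add : ∀ r s t, R ≤ r → r < s → s < t → t ≤ S → a r t = a r s + a s t)
    {r s t : ℝ} (hR : R ≤ r) (hrs : r ≤ s) (hst : s ≤ t) (hS : t ≤ S) :
    a r t = a r s + a s t := by
  rcases hrs.eq_or_lt with rfl | hrs
  · rw [apply_self_eq_zero ha_norm hR (hst.trans hS), zero_add]
  rcases hst.eq_or_lt with rfl | hst
  · rw [apply_self_eq_zero ha_norm (hR.trans hrs.le) hS, add_zero]
  exact ha_add r s t hR hrs hst hS

end Additive

section Estimates

variable {A : Type*} [NormedRing A] [NormOneClass A] {R S C : ℝ} {a : ℝ → ℝ → A}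
  (ha_norm : ∀ r s, R ≤ r → r ≤ s → s ≤ S → ‖a r s‖ ≤ (s - r) * C)
  (ha_add : ∀ r s t, R ≤ r → r < s → s < t → t ≤ S → a r t = a r s + a s t)

include ha_norm

lemma norm_one_add_le_exp {r s : ℝ} (hR : R ≤ r) (hrs : r ≤ s) (hS : s ≤ S) :
    ‖1 + a r s‖ ≤ exp (C * (s - r)) :=
  calc ‖1 + a r s‖ ≤ ‖(1 : A)‖ + ‖a r s‖ := norm_add_le _ _
    _ ≤ 1 + (s - r) * C := by rw [norm_one]; linarith [ha_norm r s hR hrs hS]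
    _ ≤ exp (C * (s - r)) := by linarith [add_one_le_exp (C * (s - r))]

lemma norm_consecProd_le {t : ℝ} :
    ∀ {x : ℝ} {l : List ℝ}, (x :: l).Pairwise (· ≤ ·) → (∀ y ∈ x :: l, y ∈ Icc R S) →
      (x :: l).getLast? = some t → ‖consecProd (fun r s => 1 + a r s) (x :: l)‖ ≤ exp (C * (t - x))
  | x, [], _, _, hlast => by
    obtain rfl : x = t := by simpa using hlast
    simp
  | x, y :: l, hsort, hIcc, hlast => by
    have hxy : x ≤ y := List.rel_of_pairwise_cons hsort List.mem_cons_self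
    have hy := norm_consecProd_le hsort.of_cons (fun z hz => hIcc z (List.mem_cons_of_mem x hz))
      (by simpa using hlast)
    calc ‖consecProd (fun r s => 1 + a r s) (x :: y :: l)‖
        ≤ ‖1 + a x y‖ * ‖consecProd (fun r s => 1 + a r s) (y :: l)‖ := norm_mul_le _ _
      _ ≤ exp (C * (y - x)) * exp (C * (t - y)) := by
        gcongr
        exact norm_one_add_le_exp ha_norm (hIcc x (by simp)).1 hxy (hIcc y (by simp)).2
      _ = exp (C * (t - x)) := by rw [← exp_add]; ring_nf

include ha_add in
lemma norm_consecProd_sub_le {t : ℝ} :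
    ∀ {x : ℝ} {l : List ℝ}, (x :: l).Pairwise (· ≤ ·) → (∀ y ∈ x :: l, y ∈ Icc R S) →
      (x :: l).getLast? = some t →
      ‖consecProd (fun r s => 1 + a r s) (x :: l) - (1 + a x t)‖ ≤
        (C * (t - x)) ^ 2 / 2 * exp (C * (t - x))
  | x, [], _, hIcc, hlast => by
    obtain rfl : x = t := by simpa using hlast
    simp [apply_self_eq_zero ha_norm (hIcc x List.mem_cons_self).1 (hIcc x List.mem_cons_self).2]
  | x, y :: l, hsort, hIcc, hlast => by
    have hlast' : (y :: l).getLast? = some t := by simpa using hlast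
    have hxy : x ≤ y := List.rel_of_pairwise_cons hsort List.mem_cons_self
    have hyt : y ≤ t := List.head_le_of_getLast?_eq_some hsort.of_cons hlast'
    have hR : R ≤ x := (hIcc x List.mem_cons_self).1
    have hS : t ≤ S := (hIcc t (List.mem_of_getLast? hlast)).2
    have hxy_norm : ‖a x y‖ ≤ C * (y - x) := by linarith [ha_norm x y hR hxy (hyt.trans hS)]
    have hyt_norm : ‖a y t‖ ≤ C * (t - y) := by linarith [ha_norm y t (hR.trans hxy) hyt hS]
    have ih := norm_consecProd_sub_le hsort.of_cons (fun z hz => hIcc z (List.mem_cons_of_mem x hz))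
      hlast'
    set P := consecProd (fun r s => 1 + a r s) (y :: l)
    calc ‖(1 + a x y) * P - (1 + a x t)‖ = ‖(1 + a x y) * (P - (1 + a y t)) + a x y * a y t‖ := by
          rw [apply_add_of_le ha_norm ha_add hR hxy hyt hS]; congr 1; noncomm_ring
      _ ≤ ‖1 + a x y‖ * ‖P - (1 + a y t)‖ + ‖a x y‖ * ‖a y t‖ :=
          (norm_add_le _ _).trans (add_le_add (norm_mul_le _ _) (norm_mul_le _ _))
      _ ≤ exp (C * (y - x)) * ((C * (t - y)) ^ 2 / 2 * exp (C * (t - y))) +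
            C * (y - x) * (C * (t - y)) := by
          gcongr
          · exact norm_one_add_le_exp ha_norm hR hxy (hyt.trans hS)
          · exact (norm_nonneg _).trans hxy_norm
      _ ≤ (C * (y - x) + C * (t - y)) ^ 2 / 2 * exp (C * (y - x) + C * (t - y)) :=
          exp_mul_sq_add_mul_le ((norm_nonneg _).trans hxy_norm) ((norm_nonneg _).trans hyt_norm)
      _ = (C * (t - x)) ^ 2 / 2 * exp (C * (t - x)) := by ring_nf

include ha_add in
lemma norm_consecProd_sub_consecProd_le {t : ℝ} :
    ∀ {r : ℝ} {M L : List ℝ}, M ⊆ L → (r :: M).Pairwise (· < ·) → (r :: L).Pairwise (· < ·) →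
      (∀ y ∈ r :: L, y ∈ Icc R S) → (r :: M).getLast? = some t → (r :: L).getLast? = some t →
      ‖consecProd (fun r s => 1 + a r s) (r :: L) - consecProd (fun r s => 1 + a r s) (r :: M)‖ ≤
        1 / 2 * listMesh (r :: M) * (t - r) * C ^ 2 * exp (C * (t - r))
  | r, [], L, _, _, hL, _, hMt, hLt => by
    obtain rfl : r = t := by simpa using hMt
    obtain rfl : L = [] := List.eq_nil_of_getLast?_cons_eq_some hL hLt
    simp
  | r, s :: M, L, hML, hM, hL, hIcc, hMt, hLt => by
    obtain ⟨L₁, L₂, rfl⟩ := List.append_of_mem (hML List.mem_cons_self)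
    have hM₂ : M ⊆ L₂ :=
      List.subset_of_subset_append_cons hM.of_cons hL.of_cons (List.cons_subset.1 hML).2
    rw [← List.cons_append] at hL hIcc hLt ⊢
    have hsub₁ : (r :: L₁ ++ [s]).Sublist (r :: L₁ ++ s :: L₂) :=
      List.Sublist.append_left (List.cons_sublist_cons.2 (List.nil_sublist _)) _
    have hsub₂ : (s :: L₂).Sublist (r :: L₁ ++ s :: L₂) := List.sublist_append_right _ _
    have hMt' : (s :: M).getLast? = some t := by simpa using hMt
    have hL₂t : (s :: L₂).getLast? = some t := by rwa [List.getLast?_append_cons] at hLt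
    have hrs : r < s := List.rel_of_pairwise_cons hM List.mem_cons_self
    have hst : s ≤ t := List.head_le_of_getLast?_eq_some (hM.of_cons.imp le_of_lt) hMt'
    have hR : R ≤ r := (hIcc r List.mem_cons_self).1
    have hS : t ≤ S := (hIcc t (List.mem_of_getLast? hLt)).2
    have ih := norm_consecProd_sub_consecProd_le hM₂ hM.of_cons (hL.sublist hsub₂)
      (fun y hy => hIcc y (hsub₂.subset hy)) hMt' hL₂t
    have hloc := norm_consecProd_sub_le ha_norm ha_add (t := s) ((hL.sublist hsub₁).imp le_of_lt)
      (fun y hy => hIcc y (hsub₁.subset hy)) (List.getLast?_append_cons (r :: L₁) s [])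
    have hnorm := norm_consecProd_le ha_norm ((hL.sublist hsub₂).imp le_of_lt)
      (fun y hy => hIcc y (hsub₂.subset hy)) hL₂t
    rw [consecProd_append_cons, consecProd_cons_cons]
    calc _ ≤ _ := norm_mul_sub_mul_le _ _ _ _
      _ ≤ (C * (s - r)) ^ 2 / 2 * exp (C * (s - r)) * exp (C * (t - s)) +
          exp (C * (s - r)) *
            (1 / 2 * listMesh (s :: M) * (t - s) * C ^ 2 * exp (C * (t - s))) := by
        gcongr
        · exact hloc
        · exact norm_one_add_le_exp ha_norm hR hrs.le (hst.trans hS)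
      _ ≤ _ := by
        set μ := listMesh (s :: M)
        have hμ₁ : (s - r) ^ 2 ≤ max (s - r) μ * (s - r) := by
          rw [sq]; exact mul_le_mul_of_nonneg_right (le_max_left _ _) (sub_nonneg.2 hrs.le)
        have hμ₂ : μ * (t - s) ≤ max (s - r) μ * (t - s) :=
          mul_le_mul_of_nonneg_right (le_max_right _ _) (sub_nonneg.2 hst)
        have hpos : 0 ≤ C ^ 2 / 2 * exp (C * (s - r)) * exp (C * (t - s)) := by positivity
        rw [listMesh_cons_cons, show C * (t - r) = C * (s - r) + C * (t - s) by ring, exp_add]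
        linear_combination mul_le_mul_of_nonneg_left (add_le_add hμ₁ hμ₂) hpos

end Estimates

lemma IsPartition.sort_eq_cons {R S : ℝ} {α : Finset ℝ} (h : IsPartition R S α) :
    α.sort (· ≤ ·) = R :: (α.erase R).sort (· ≤ ·) := by
  conv_lhs => rw [← Finset.insert_erase h.1]
  exact Finset.sort_insert _ (fun b hb => (h.2.2 b (Finset.mem_of_mem_erase hb)).1)
    (Finset.notMem_erase R α)

lemma IsPartition.getLast?_sort {R S : ℝ} {α : Finset ℝ} (h : IsPartition R S α) :
    (α.sort (· ≤ ·)).getLast? = some S :=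
  List.getLast?_eq_of_forall_le (Finset.pairwise_sort _ _) ((Finset.mem_sort _).2 h.2.1)
    fun y hy => (h.2.2 y ((Finset.mem_sort _).1 hy)).2

theorem stmt_6_general {A : Type*} [NormedRing A] [NormOneClass A]
    (R S C : ℝ)
    (a : ℝ → ℝ → A)
    (ha_norm : ∀ r s, R ≤ r → r ≤ s → s ≤ S → ‖a r s‖ ≤ (s - r) * C)
    (ha_add : ∀ r s t, R ≤ r → r < s → s < t → t ≤ S → a r t = a r s + a s t) :
    ∀ γ α : Finset ℝ, IsPartition R S γ → IsPartition R S α → γ ⊆ α →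
      ‖partitionProd (fun r s => 1 + a r s) α - partitionProd (fun r s => 1 + a r s) γ‖ ≤
        (1 / 2) * mesh γ * (S - R) * C ^ 2 * Real.exp (C * (S - R)) := by
  intro γ α hγ hα hγα
  have hγ_sorted := (Finset.sortedLT_sort γ).pairwise
  have hα_sorted := (Finset.sortedLT_sort α).pairwise
  have hγ_last := hγ.getLast?_sort
  have hα_last := hα.getLast?_sort
  have hα_Icc : ∀ y ∈ α.sort (· ≤ ·), y ∈ Icc R S :=
    fun y hy => hα.2.2 y ((Finset.mem_sort _).1 hy)
  rw [partitionProd_eq_consecProd, partitionProd_eq_consecProd, mesh_eq_listMesh]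
  rw [hγ.sort_eq_cons] at hγ_sorted hγ_last ⊢
  rw [hα.sort_eq_cons] at hα_sorted hα_last hα_Icc ⊢
  refine norm_consecProd_sub_consecProd_le ha_norm ha_add (fun x hx => ?_) hγ_sorted hα_sorted
    hα_Icc hγ_last hα_last
  rw [Finset.mem_sort] at hx ⊢
  exact Finset.erase_subset_erase R hγα hx

/-- mesh estimate for the difference of the ordered products over a
partition `γ` and a refinement `α` of it. -/
theorem stmt_6 {A : Type*} [NormedRing A] [NormOneClass A] [NormedAlgebra ℂ A]
    (R S C : ℝ) (hR : 0 ≤ R) (hRS : R < S) (hC : 0 < C)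
    (a : ℝ → ℝ → A)
    (ha_norm : ∀ r s, R ≤ r → r ≤ s → s ≤ S → ‖a r s‖ ≤ (s - r) * C)
    (ha_add : ∀ r s t, R ≤ r → r < s → s < t → t ≤ S → a r t = a r s + a s t) :
    ∀ γ α : Finset ℝ, IsPartition R S γ → IsPartition R S α → γ ⊆ α →
      ‖partitionProd (fun r s => 1 + a r s) α - partitionProd (fun r s => 1 + a r s) γ‖ ≤
        (1 / 2) * mesh γ * (S - R) * C ^ 2 * Real.exp (C * (S - R)) :=
  stmt_6_general R S C a ha_norm ha_add
end

section
/- Let A be a complete normed unital algebra (Banach algebra) with submultiplicative norm and ‖1‖ = 1, C > 0, and let (a_{r,s})_{0 ≤ r ≤ s} be a family of elements of A such that ‖a_{r,s}‖ ≤ (s − r)·C for all 0 ≤ r ≤ s, and a_{r,t} = a_{r,s} + a_{s,t} whenever 0 ≤ r < s < t. Set g_{r,s} := 1 + a_{r,s} and, for 0 ≤ R < S, let U_{R,S} ∈ A denote the limit of the net (Θ_α)_{α ∈ P[R,S]}, where Θ_α is the ordered product of the g's over consecutive points of the partition α. Then for all 0 ≤ r < s < t one has U_{r,s}·U_{s,t}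 = U_{r,t}. -/
/-!
Every partition of `[r, t]` finer than one containing `s` splits at `s`, and its ordered
product factors as the product over the part in `[r, s]` times the product over the part in
`[s, t]`. Hence the net of products over `[r, t]` converges to `U r s * U s t` by continuity of
multiplication, and limits of these nets are unique.
-/

open Finset

theorem List.zip_tail_append_cons {β : Type*} (l₁ : List β) (x : β) (l₂ : List β) :
    (l₁ ++ x :: l₂).zip (l₁ ++ x :: l₂).tail =
      (l₁ ++ [x]).zip (l₁ ++ [x]).tail ++ (x :: l₂).zip l₂ := by
  induction l₁ with
  | nil => simp
  | cons a l ih =>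
    cases l with
    | nil => simp
    | cons b l' => simpa using ih

theorem Finset.sort_filter {α : Type*} [LinearOrder α] (s : Finset α) (p : α → Prop)
    [DecidablePred p] : (s.filter p).sort = s.sort.filter p := by
  refine List.Perm.eq_of_pairwise' (pairwise_sort _ (· ≤ ·))
    ((pairwise_sort s (· ≤ ·)).filter _) ?_
  rw [← Multiset.coe_eq_coe, ← Multiset.filter_coe, sort_eq, sort_eq, filter_val]

theorem partitionProd_eq_mul {A : Type*} [Ring A] (g : ℝ → ℝ → A) {α : Finset ℝ} {s : ℝ}
    (hs : s ∈ α) :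
    partitionProd g α =
      partitionProd g (α.filter (· ≤ s)) * partitionProd g (α.filter (s ≤ ·)) := by
  obtain ⟨L₁, L₂, hL⟩ := List.append_of_mem ((mem_sort (· ≤ ·)).mpr hs)
  have hsorted : (L₁ ++ s :: L₂).Pairwise (· < ·) := hL ▸ (sortedLT_sort α).pairwise
  obtain ⟨-, hL₂, hL₁⟩ := List.pairwise_append.mp hsorted
  have hlt : ∀ x ∈ L₁, x < s := fun x hx => hL₁ x hx s List.mem_cons_self
  have hgt : ∀ x ∈ L₂, s < x := (List.pairwise_cons.mp hL₂).1
  have hleft : (α.filter (· ≤ s)).sort = L₁ ++ [s] := by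
    rw [sort_filter, hL, List.filter_append, List.filter_cons_of_pos (by simp),
      List.filter_eq_self.mpr fun x hx => decide_eq_true (hlt x hx).le,
      List.filter_eq_nil_iff.mpr fun x hx => by simpa using hgt x hx]
  have hright : (α.filter (s ≤ ·)).sort = s :: L₂ := by
    rw [sort_filter, hL, List.filter_append, List.filter_cons_of_pos (by simp),
      List.filter_eq_self.mpr fun x hx => decide_eq_true (hgt x hx).le,
      List.filter_eq_nil_iff.mpr fun x hx => by simpa using hlt x hx, List.nil_append]
  rw [partitionProd, partitionProd, partitionProd, consecPairs, consecPairs, consecPairs,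
    hleft, hright, hL, List.zip_tail_append_cons, List.map_append, List.prod_append,
    List.tail_cons]

namespace IsPartition

variable {r s t : ℝ} {α γ : Finset ℝ}

theorem union (hα : IsPartition r s α) (hγ : IsPartition r s γ) : IsPartition r s (α ∪ γ) :=
  ⟨mem_union_left _ hα.1, mem_union_left _ hα.2.1, fun x hx =>
    (mem_union.mp hx).elim (hα.2.2 x) (hγ.2.2 x)⟩

theorem union_adjacent (hα : IsPartition r s α) (hγ : IsPartition s t γ) :
    IsPartition r t (α ∪ γ) := by
  have hrs := (hγ.2.2 s hγ.1).2
  have hst := (hα.2.2 s hα.2.1).1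
  refine ⟨mem_union_left _ hα.1, mem_union_right _ hγ.2.1, fun x hx => ?_⟩
  rcases mem_union.mp hx with h | h
  · exact ⟨(hα.2.2 x h).1, (hα.2.2 x h).2.trans hrs⟩
  · exact ⟨hst.trans (hγ.2.2 x h).1, (hγ.2.2 x h).2⟩

theorem filter_le (hα : IsPartition r t α) (hs : s ∈ α) :
    IsPartition r s (α.filter (· ≤ s)) :=
  ⟨mem_filter.mpr ⟨hα.1, (hα.2.2 s hs).1⟩, mem_filter.mpr ⟨hs, le_rfl⟩, fun x hx =>
    ⟨(hα.2.2 x (mem_filter.mp hx).1).1, (mem_filter.mp hx).2⟩⟩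

theorem filter_ge (hα : IsPartition r t α) (hs : s ∈ α) :
    IsPartition s t (α.filter (s ≤ ·)) :=
  ⟨mem_filter.mpr ⟨hs, le_rfl⟩, mem_filter.mpr ⟨hα.2.1, (hα.2.2 s hs).2⟩, fun x hx =>
    ⟨(mem_filter.mp hx).2, (hα.2.2 x (mem_filter.mp hx).1).2⟩⟩

end IsPartition

namespace IsNetLimit

variable {A : Type*} [NormedRing A] {g : ℝ → ℝ → A} {r s t : ℝ} {u v : A}

theorem unique (hu : IsNetLimit g r s u) (hv : IsNetLimit g r s v) : u = v := by
  refine eq_of_forall_dist_le fun ε hε => ?_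
  obtain ⟨γ₁, hγ₁, H₁⟩ := hu (ε / 2) (half_pos hε)
  obtain ⟨γ₂, hγ₂, H₂⟩ := hv (ε / 2) (half_pos hε)
  have hγ := hγ₁.union hγ₂
  have h₁ := H₁ _ hγ subset_union_left
  have h₂ := H₂ _ hγ subset_union_right
  rw [← dist_eq_norm] at h₁ h₂
  linarith [dist_triangle_left u v (partitionProd g (γ₁ ∪ γ₂))]

theorem mul (hu : IsNetLimit g r s u) (hv : IsNetLimit g s t v) :
    IsNetLimit g r t (u * v) := by
  intro ε hε
  obtain ⟨δ, hδ, hmul⟩ := Metric.tendsto_nhds_nhds.mp (continuous_mul.tendsto (u, v)) ε hε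
  obtain ⟨γ₁, hγ₁, H₁⟩ := hu δ hδ
  obtain ⟨γ₂, hγ₂, H₂⟩ := hv δ hδ
  refine ⟨γ₁ ∪ γ₂, hγ₁.union_adjacent hγ₂, fun α hα hsub => ?_⟩
  have hs : s ∈ α := hsub (mem_union_left _ hγ₁.2.1)
  have h₁ := H₁ _ (hα.filter_le hs) fun x hx =>
    mem_filter.mpr ⟨hsub (mem_union_left _ hx), (hγ₁.2.2 x hx).2⟩
  have h₂ := H₂ _ (hα.filter_ge hs) fun x hx =>
    mem_filter.mpr ⟨hsub (mem_union_right _ hx), (hγ₂.2.2 x hx).1⟩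
  rw [← dist_eq_norm] at h₁ h₂ ⊢
  rw [partitionProd_eq_mul g hs]
  exact hmul (x := (_, _)) (by rw [Prod.dist_eq]; exact max_lt h₁ h₂)

end IsNetLimit

theorem stmt_9_general {A : Type*} [NormedRing A]
    (a : ℝ → ℝ → A)
    (U : ℝ → ℝ → A)
    (hU : ∀ r s, 0 ≤ r → r < s → IsNetLimit (fun p q => (1 : A) + a p q) r s (U r s)) :
    ∀ r s t, 0 ≤ r → r < s → s < t → U r s * U s t = U r t := by
  intro r s t hr hrs hst
  exact ((hU r s hr hrs).mul (hU s t (hr.trans hrs.le) hst)).unique (hU r t hr (hrs.trans hst))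

/-- multiplicativity (evolution property) `U_{r,s} · U_{s,t} = U_{r,t}` of
the limits of the nets of ordered products. -/
theorem stmt_9 {A : Type*} [NormedRing A] [NormOneClass A] [NormedAlgebra ℂ A]
    [CompleteSpace A]
    (C : ℝ) (hC : 0 < C)
    (a : ℝ → ℝ → A)
    (ha_norm : ∀ r s, 0 ≤ r → r ≤ s → ‖a r s‖ ≤ (s - r) * C)
    (ha_add : ∀ r s t, 0 ≤ r → r < s → s < t → a r t = a r s + a s t)
    (U : ℝ → ℝ → A)
    (hU : ∀ r s, 0 ≤ r → r < s → IsNetLimit (fun p q => (1 : A) + a p q) r s (U r s)) :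
    ∀ r s t, 0 ≤ r → r < s → s < t → U r s * U s t = U r t :=
  stmt_9_general a U hU
end

section
/- Let A be a complete normed unital algebra (Banach algebra) with submultiplicative norm and ‖1‖ = 1, C > 0, and let (a_{r,s})_{0 ≤ r ≤ s} be a family of elements of A such that ‖a_{r,s}‖ ≤ (s − r)·C for all r ≤ s and a_{r,t} = a_{r,s} + a_{s,t} whenever r < s < t. Set g_{r,s} := 1 + a_{r,s} and let U_{r,s} denote the limit of the net of ordered products Θ_α over partitions α of [r,s]. Then ‖U_{r,s} − 1‖ ≤ exp(C·(s − r)) − 1 for all r < s; in particular, for every fixed r ≥ 0, U_{r,s} converges in norm to the unit 1 of A as s decreases to r. -/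
/-!
Each ordered product `Θ_α = ∏ (1 + a_{tᵢ,tᵢ₊₁})` satisfies `‖Θ_α - 1‖ ≤ exp (∑ ‖a_{tᵢ,tᵢ₊₁}‖) - 1`
(expand one factor at a time, using `1 + x ≤ exp x`), and the growth bound on `a` makes the
exponent at most `C` times the telescoping sum `∑ (tᵢ₊₁ - tᵢ) = s - r`. The bound is uniform in `α`,
so it passes to the limit `U_{r,s}`, and it tends to `0` as `s ↓ r`.
-/

open Filter Topology

namespace List

theorem IsChain.rel_of_mem_zip_tail {α : Type*} {R : α → α → Prop} :
    ∀ {l : List α}, l.IsChain R → ∀ {p : α × α}, p ∈ l.zip l.tail → R p.1 p.2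
  | [], _, _, hp => by simp at hp
  | [_], _, _, hp => by simp at hp
  | x :: y :: t, h, p, hp => by
    rw [isChain_cons_cons] at h
    rcases mem_cons.mp hp with rfl | hp
    · exact h.1
    · exact h.2.rel_of_mem_zip_tail hp

theorem sum_map_sub_zip_tail {M : Type*} [AddCommGroup M] :
    ∀ (l : List M) (hl : l ≠ []),
      ((l.zip l.tail).map fun p => p.2 - p.1).sum = l.getLast hl - l.head hl
  | [x], _ => by simp
  | x :: y :: t, _ => by
    have ih := sum_map_sub_zip_tail (y :: t) (cons_ne_nil y t)
    rw [tail_cons, head_cons] at ih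
    rw [tail_cons, zip_cons_cons, map_cons, sum_cons, ih, getLast_cons_cons, head_cons]
    abel

theorem norm_prod_map_one_add_sub_one_le {A : Type*} [NormedRing A] [NormOneClass A] :
    ∀ xs : List A, ‖(xs.map (1 + ·)).prod - 1‖ ≤ Real.exp (xs.map (‖·‖)).sum - 1
  | [] => by simp
  | x :: xs => by
    set P := (xs.map (1 + ·)).prod
    set E := Real.exp (xs.map (‖·‖)).sum
    have ih : ‖P - 1‖ ≤ E - 1 := norm_prod_map_one_add_sub_one_le xs
    have hP : ‖P‖ ≤ E := by
      linarith [norm_le_norm_sub_add P 1, (norm_one : ‖(1 : A)‖ = 1)]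
    rw [map_cons, map_cons, prod_cons, sum_cons, Real.exp_add,
      show (1 + x) * P - 1 = (P - 1) + x * P by noncomm_ring]
    calc ‖(P - 1) + x * P‖ ≤ (E - 1) + ‖x‖ * E :=
          norm_add_le_of_le ih ((norm_mul_le _ _).trans (by gcongr))
      _ = (1 + ‖x‖) * E - 1 := by ring
      _ ≤ Real.exp ‖x‖ * E - 1 := by
          gcongr
          linarith [Real.add_one_le_exp ‖x‖]

end List

theorem fst_mem_and_fst_le_snd_of_mem_consecPairs {α : Finset ℝ} {p : ℝ × ℝ}
    (hp : p ∈ consecPairs α) : p.1 ∈ α ∧ p.1 ≤ p.2 :=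
  ⟨(α.mem_sort _).mp (List.of_mem_zip hp).1,
    (α.pairwise_sort (· ≤ ·)).isChain.rel_of_mem_zip_tail hp⟩

theorem IsPartition.sum_consecPairs_sub {r s : ℝ} {α : Finset ℝ} (hα : IsPartition r s α) :
    ((consecPairs α).map fun p => p.2 - p.1).sum = s - r := by
  obtain ⟨hr, hs, hbounds⟩ := hα
  set l := α.sort (· ≤ ·)
  have hsorted : l.Pairwise (· ≤ ·) := α.pairwise_sort _
  have hrl : r ∈ l := (α.mem_sort _).mpr hr
  have hsl : s ∈ l := (α.mem_sort _).mpr hs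
  have hl : l ≠ [] := List.ne_nil_of_mem hrl
  have hhead : l.head hl = r :=
    le_antisymm (hsorted.rel_head hrl) (hbounds _ ((α.mem_sort _).mp (l.head_mem hl))).1
  have hlast : l.getLast hl = s :=
    le_antisymm (hbounds _ ((α.mem_sort _).mp (l.getLast_mem hl))).2 (hsorted.rel_getLast hsl)
  rw [consecPairs, List.sum_map_sub_zip_tail l hl, hhead, hlast]

theorem norm_partitionProd_one_add_sub_one_le {A : Type*} [NormedRing A] [NormOneClass A]
    {C r s : ℝ} {a : ℝ → ℝ → A} (ha : ∀ p q, r ≤ p → p ≤ q → ‖a p q‖ ≤ (q - p) * C)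
    {α : Finset ℝ} (hα : IsPartition r s α) :
    ‖partitionProd (fun p q => 1 + a p q) α - 1‖ ≤ Real.exp (C * (s - r)) - 1 := by
  have hprod : partitionProd (fun p q => 1 + a p q) α
      = (((consecPairs α).map fun p => a p.1 p.2).map (1 + ·)).prod := by
    rw [partitionProd, List.map_map]
    rfl
  have hsum : (((consecPairs α).map fun p => a p.1 p.2).map (‖·‖)).sum ≤ C * (s - r) :=
    calc (((consecPairs α).map fun p => a p.1 p.2).map (‖·‖)).sum
        ≤ ((consecPairs α).map fun p => (p.2 - p.1) * C).sum := by
          rw [List.map_map]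
          refine List.sum_le_sum fun p hp => ?_
          obtain ⟨hmem, hle⟩ := fst_mem_and_fst_le_snd_of_mem_consecPairs hp
          exact ha p.1 p.2 (hα.2.2 _ hmem).1 hle
      _ = C * (s - r) := by
          rw [List.sum_map_mul_right, hα.sum_consecPairs_sub, mul_comm]
  rw [hprod]
  exact (List.norm_prod_map_one_add_sub_one_le _).trans (by gcongr)

theorem IsNetLimit.norm_sub_le {A : Type*} [NormedRing A] {g : ℝ → ℝ → A} {r s : ℝ} {u v : A}
    {B : ℝ} (h : IsNetLimit g r s u)
    (hB : ∀ α, IsPartition r s α → ‖partitionProd g α - v‖ ≤ B) : ‖u - v‖ ≤ B := by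
  refine le_of_forall_pos_lt_add fun ε hε => ?_
  obtain ⟨γ, hγ, hlim⟩ := h ε hε
  calc ‖u - v‖ ≤ ‖partitionProd g γ - u‖ + ‖partitionProd g γ - v‖ := by
        rw [norm_sub_rev (partitionProd g γ)]
        exact norm_sub_le_norm_sub_add_norm_sub _ _ _
    _ < ε + B := add_lt_add_of_lt_of_le (hlim γ hγ subset_rfl) (hB γ hγ)
    _ = B + ε := add_comm _ _

theorem stmt_10_general {A : Type*} [NormedRing A] [NormOneClass A]
    (C : ℝ)
    (a : ℝ → ℝ → A)
    (ha_norm : ∀ r s, 0 ≤ r → r ≤ s → ‖a r s‖ ≤ (s - r) * C)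
    (U : ℝ → ℝ → A)
    (hU : ∀ r s, 0 ≤ r → r < s → IsNetLimit (fun p q => (1 : A) + a p q) r s (U r s)) :
    (∀ r s, 0 ≤ r → r < s → ‖U r s - 1‖ ≤ Real.exp (C * (s - r)) - 1) ∧
      ∀ r, 0 ≤ r →
        Filter.Tendsto (fun s => U r s) (nhdsWithin r (Set.Ioi r)) (nhds 1) := by
  have hbound : ∀ r s, 0 ≤ r → r < s → ‖U r s - 1‖ ≤ Real.exp (C * (s - r)) - 1 :=
    fun r s hr hrs => (hU r s hr hrs).norm_sub_le fun _ hα =>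
      norm_partitionProd_one_add_sub_one_le (fun p q hp => ha_norm p q (hr.trans hp)) hα
  refine ⟨hbound, fun r hr => ?_⟩
  have hexp : Tendsto (fun s => Real.exp (C * (s - r)) - 1) (𝓝[>] r) (𝓝 0) := by
    have hcont : Continuous fun s => Real.exp (C * (s - r)) - 1 := by fun_prop
    simpa using (hcont.tendsto r).mono_left nhdsWithin_le_nhds
  rw [tendsto_iff_norm_sub_tendsto_zero]
  exact squeeze_zero' (Eventually.of_forall fun _ => norm_nonneg _)
    (eventually_nhdsWithin_of_forall fun s hs => hbound r s hr hs) hexp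

/-- the bound `‖U_{r,s} - 1‖ ≤ exp(C·(s - r)) - 1`, and the norm
convergence `U_{r,s} → 1` as `s` decreases to `r`. -/
theorem stmt_10 {A : Type*} [NormedRing A] [NormOneClass A] [NormedAlgebra ℂ A]
    [CompleteSpace A]
    (C : ℝ) (hC : 0 < C)
    (a : ℝ → ℝ → A)
    (ha_norm : ∀ r s, 0 ≤ r → r ≤ s → ‖a r s‖ ≤ (s - r) * C)
    (ha_add : ∀ r s t, 0 ≤ r → r < s → s < t → a r t = a r s + a s t)
    (U : ℝ → ℝ → A)
    (hU : ∀ r s, 0 ≤ r → r < s → IsNetLimit (fun p q => (1 : A) + a p q) r s (U r s)) :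
    (∀ r s, 0 ≤ r → r < s → ‖U r s - 1‖ ≤ Real.exp (C * (s - r)) - 1) ∧
      ∀ r, 0 ≤ r →
        Filter.Tendsto (fun s => U r s) (nhdsWithin r (Set.Ioi r)) (nhds 1) :=
  stmt_10_general C a ha_norm U hU
end
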